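/- arXiv:1109.5241 — 2 statements merged into one kernel-verified Lean document; each statement's English description precedes it below -/
import Mathlib

section
/- Let ψ : ℝ^d → ℝ be a C² function, let λ > 1, let U ⊆ ℝ^d be an open convex set, and let p ∈ ℝ^d be such that for all u ∈ U and all v ∈ ℝ^d: (1/λ)·vᵀψ″(u)v ≤ vᵀψ″(p)v ≤ λ·vᵀψ″(u)v, where ψ″ denotes the Hessian matrix of ψ. Then for all x, y ∈ U: (1/(2λ))·(x−y)ᵀψ″(p)(x−y) ≤ D_ψ(x;y) ≤ (λ/2)·(x−y)ᵀψ″(p)(x−y). -/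
/-- The Hessian matrix of `ψ : ℝ^d → ℝ` at the point `x`. -/
noncomputable def hess {d : ℕ} (ψ : EuclideanSpace ℝ (Fin d) → ℝ)
    (x : EuclideanSpace ℝ (Fin d)) : Matrix (Fin d) (Fin d) ℝ :=
  Matrix.of fun i j =>
    iteratedFDeriv ℝ 2 ψ x ![EuclideanSpace.single i 1, EuclideanSpace.single j 1]

/-- The quadratic form `v ↦ vᵀ M v` on `ℝ^d` associated to a matrix `M`. -/
noncomputable def quadForm {d : ℕ} (M : Matrix (Fin d) (Fin d) ℝ)
    (v : EuclideanSpace ℝ (Fin d)) : ℝ :=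
  ∑ i, ∑ j, v i * M i j * v j

/-- The Bregman distance `D_ψ(x;y) = ψ(x) − ψ(y) − ∇ψ(y)ᵀ(x−y)`. -/
noncomputable def breg {d : ℕ} (ψ : EuclideanSpace ℝ (Fin d) → ℝ)
    (x y : EuclideanSpace ℝ (Fin d)) : ℝ :=
  ψ x - ψ y - inner ℝ (gradient ψ y) (x - y)

/-!
By Taylor's theorem with Lagrange remainder along the segment from `y` to `x`, the Bregman
distance equals `½ (x−y)ᵀ ψ″(z) (x−y)` for some point `z` of that segment. By convexity `z ∈ U`,
so the comparability of `ψ″(z)` with `ψ″(p)` gives both bounds.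
-/

open Set

theorem exists_sub_sub_deriv_eq_half {g g' g'' : ℝ → ℝ} (hg : ∀ t, HasDerivAt g (g' t) t)
    (hg' : ∀ t, HasDerivAt g' (g'' t) t) :
    ∃ ξ ∈ Ioo (0 : ℝ) 1, g 1 - g 0 - g' 0 = g'' ξ / 2 := by
  have hlin (t : ℝ) : HasDerivAt (fun s => g s - s * g' 0) (g' t - g' 0) t :=
    (hg t).sub (hasDerivAt_mul_const _)
  -- Cauchy's mean value theorem against `t ↦ t²`, then the mean value theorem for `g'` on `[0, c]`.
  obtain ⟨c, hc, hcauchy⟩ := exists_ratio_hasDerivAt_eq_ratio_slope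
    (fun t => g t - t * g' 0) (fun t => g' t - g' 0) zero_lt_one
    (fun t _ => (hlin t).continuousAt.continuousWithinAt) (fun t _ => hlin t)
    (fun t => t ^ 2) (fun t => 2 * t)
    (fun t _ => (continuous_pow 2).continuousAt.continuousWithinAt)
    (fun t _ => by simpa using hasDerivAt_pow 2 t)
  obtain ⟨η, hη, hmvt⟩ := exists_hasDerivAt_eq_slope g' g'' hc.1
    (fun t _ => (hg' t).continuousAt.continuousWithinAt) (fun t _ => hg' t)
  refine ⟨η, ⟨hη.1, hη.2.trans hc.2⟩, ?_⟩
  rw [hmvt, sub_zero, div_div, eq_div_iff (by linarith [hc.1])]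
  linarith

theorem ContDiff.exists_sub_sub_fderiv_eq_half {E : Type*} [NormedAddCommGroup E]
    [NormedSpace ℝ E] {ψ : E → ℝ} (hψ : ContDiff ℝ 2 ψ) (x y : E) :
    ∃ ξ ∈ Ioo (0 : ℝ) 1, ψ x - ψ y - fderiv ℝ ψ y (x - y) =
      fderiv ℝ (fderiv ℝ ψ) (y + ξ • (x - y)) (x - y) (x - y) / 2 := by
  have hline (t : ℝ) : HasDerivAt (fun s : ℝ => y + s • (x - y)) (x - y) t := by
    simpa using ((hasDerivAt_id t).smul_const (x - y)).const_add y
  have hfderiv : ContDiff ℝ 1 (fderiv ℝ ψ) := hψ.fderiv_right le_rfl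
  have hg (t : ℝ) : HasDerivAt (fun s => ψ (y + s • (x - y)))
      (fderiv ℝ ψ (y + t • (x - y)) (x - y)) t :=
    (hψ.differentiable two_ne_zero _).hasFDerivAt.comp_hasDerivAt t (hline t)
  have hg' (t : ℝ) : HasDerivAt (fun s => fderiv ℝ ψ (y + s • (x - y)) (x - y))
      (fderiv ℝ (fderiv ℝ ψ) (y + t • (x - y)) (x - y) (x - y)) t :=
    ((ContinuousLinearMap.apply ℝ ℝ (x - y)).hasFDerivAt.comp _
      (hfderiv.differentiable one_ne_zero _).hasFDerivAt).comp_hasDerivAt t (hline t)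
  simpa using exists_sub_sub_deriv_eq_half hg hg'

theorem ContinuousLinearMap.apply_apply_eq_sum_single {ι : Type*} [Fintype ι] [DecidableEq ι]
    (B : EuclideanSpace ℝ ι →L[ℝ] EuclideanSpace ℝ ι →L[ℝ] ℝ) (v : EuclideanSpace ℝ ι) :
    B v v = ∑ i, ∑ j, v i * B (EuclideanSpace.single i 1) (EuclideanSpace.single j 1) * v j := by
  conv_lhs => rw [← (EuclideanSpace.basisFun ι ℝ).sum_repr v]
  simp only [map_sum, map_smul, FunLike.coe_sum, Finset.sum_apply, FunLike.coe_smul,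
    Pi.smul_apply, EuclideanSpace.basisFun_repr, EuclideanSpace.basisFun_apply, smul_eq_mul,
    Finset.mul_sum]
  rw [Finset.sum_comm]
  exact Finset.sum_congr rfl fun i _ => Finset.sum_congr rfl fun j _ => by ring

theorem quadForm_hess {d : ℕ} (ψ : EuclideanSpace ℝ (Fin d) → ℝ)
    (u v : EuclideanSpace ℝ (Fin d)) :
    quadForm (hess ψ u) v = fderiv ℝ (fderiv ℝ ψ) u v v := by
  simp [ContinuousLinearMap.apply_apply_eq_sum_single _ v, quadForm, hess,
    iteratedFDeriv_two_apply]

theorem breg_eq_sub_sub_fderiv {d : ℕ} (ψ : EuclideanSpace ℝ (Fin d) → ℝ)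
    (x y : EuclideanSpace ℝ (Fin d)) :
    breg ψ x y = ψ x - ψ y - fderiv ℝ ψ y (x - y) := by
  rw [breg, inner_gradient_left]

theorem stmt6_general {d : ℕ} (ψ : EuclideanSpace ℝ (Fin d) → ℝ) (hψ : ContDiff ℝ 2 ψ)
    (lam : ℝ) (hlam : 1 < lam) (U : Set (EuclideanSpace ℝ (Fin d)))
    (hUconv : Convex ℝ U) (p : EuclideanSpace ℝ (Fin d))
    (hcmp : ∀ u ∈ U, ∀ v : EuclideanSpace ℝ (Fin d),
      (1 / lam) * quadForm (hess ψ u) v ≤ quadForm (hess ψ p) v ∧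
      quadForm (hess ψ p) v ≤ lam * quadForm (hess ψ u) v) :
    ∀ x ∈ U, ∀ y ∈ U,
      (1 / (2 * lam)) * quadForm (hess ψ p) (x - y) ≤ breg ψ x y ∧
      breg ψ x y ≤ (lam / 2) * quadForm (hess ψ p) (x - y) := by
  intro x hx y hy
  obtain ⟨ξ, hξ, htaylor⟩ := hψ.exists_sub_sub_fderiv_eq_half x y
  have hξU : y + ξ • (x - y) ∈ U := hUconv.add_smul_sub_mem hy hx (Ioo_subset_Icc_self hξ)
  obtain ⟨hlower, hupper⟩ := hcmp _ hξU (x - y)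
  rw [breg_eq_sub_sub_fderiv, htaylor, ← quadForm_hess]
  have hlam₀ : 0 < lam := by linarith
  constructor
  · rw [div_mul_eq_mul_div, one_mul, div_le_div_iff₀ (by positivity) two_pos]
    linarith
  · rw [div_mul_eq_mul_div, div_le_div_iff_of_pos_right two_pos]
    rw [div_mul_eq_mul_div, one_mul, div_le_iff₀ hlam₀] at hlower
    linarith

/-- If the Hessian of `ψ` is `λ`-comparable on an open convex set `U` to its value at `p`,
then on `U` the Bregman distance is squeezed between the corresponding quadratic forms. -/
theorem stmt6 {d : ℕ} (ψ : EuclideanSpace ℝ (Fin d) → ℝ) (hψ : ContDiff ℝ 2 ψ)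
    (lam : ℝ) (hlam : 1 < lam) (U : Set (EuclideanSpace ℝ (Fin d)))
    (hUopen : IsOpen U) (hUconv : Convex ℝ U) (p : EuclideanSpace ℝ (Fin d))
    (hcmp : ∀ u ∈ U, ∀ v : EuclideanSpace ℝ (Fin d),
      (1 / lam) * quadForm (hess ψ u) v ≤ quadForm (hess ψ p) v ∧
      quadForm (hess ψ p) v ≤ lam * quadForm (hess ψ u) v) :
    ∀ x ∈ U, ∀ y ∈ U,
      (1 / (2 * lam)) * quadForm (hess ψ p) (x - y) ≤ breg ψ x y ∧
      breg ψ x y ≤ (lam / 2) * quadForm (hess ψ p) (x - y) :=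
  stmt6_general ψ hψ lam hlam U hUconv p hcmp
end

section
/- Let X ⊂ ℝ^d be a compact convex set with nonempty interior and let ψ be a C² function on an open set containing X whose Hessian ψ″(x) is positive definite for every x ∈ X. Then there exists M > 0 such that for all x, y ∈ X, the Bregman distance and the Riemannian distance satisfy D_ψ(x;y) ≤ M · γ(x,y). -/
/-- The Riemannian distance on `X` associated to the Hessian metric of `ψ`. -/
noncomputable def riemDist {d : ℕ} (X : Set (EuclideanSpace ℝ (Fin d)))
    (ψ : EuclideanSpace ℝ (Fin d) → ℝ) (x y : EuclideanSpace ℝ (Fin d)) : ℝ :=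
  sInf {L : ℝ | ∃ u : ℝ → EuclideanSpace ℝ (Fin d), ContDiff ℝ 1 u ∧
    (∀ t ∈ Set.Icc (0 : ℝ) 1, u t ∈ X) ∧ u 0 = x ∧ u 1 = y ∧
    L = ∫ t in (0:ℝ)..1, Real.sqrt (quadForm (hess ψ (u t)) (deriv u t))}

open Set

section QuadForm

variable {d : ℕ}

lemma quadForm_smul (M : Matrix (Fin d) (Fin d) ℝ) (c : ℝ) (v : EuclideanSpace ℝ (Fin d)) :
    quadForm M (c • v) = c ^ 2 * quadForm M v := by
  simp only [quadForm, PiLp.smul_apply, smul_eq_mul, Finset.mul_sum]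
  refine Finset.sum_congr rfl fun i _ => Finset.sum_congr rfl fun j _ => ?_
  ring

lemma quadForm_pos_of_posDef {M : Matrix (Fin d) (Fin d) ℝ} (hM : M.PosDef)
    {v : EuclideanSpace ℝ (Fin d)} (hv : v ≠ 0) : 0 < quadForm M v := by
  have hv' : (v : Fin d → ℝ) ≠ 0 := fun h => hv (by ext i; exact congrFun h i)
  simpa [quadForm, dotProduct, Matrix.mulVec, Finset.mul_sum, mul_assoc] using
    hM.dotProduct_mulVec_pos hv'

lemma ContinuousOn.quadForm {α : Type*} [TopologicalSpace α] {s : Set α}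
    {M : α → Matrix (Fin d) (Fin d) ℝ} {v : α → EuclideanSpace ℝ (Fin d)}
    (hM : ContinuousOn M s) (hv : ContinuousOn v s) :
    ContinuousOn (fun a => _root_.quadForm (M a) (v a)) s := by
  unfold _root_.quadForm
  fun_prop

end QuadForm

lemma exists_pos_mul_norm_le_sqrt_quadForm {d : ℕ} {α : Type*} [TopologicalSpace α]
    {K : Set α} (hK : IsCompact K) {M : α → Matrix (Fin d) (Fin d) ℝ}
    (hM : ContinuousOn M K) (hpos : ∀ a ∈ K, (M a).PosDef) :
    ∃ c > 0, ∀ a ∈ K, ∀ v : EuclideanSpace ℝ (Fin d), c * ‖v‖ ≤ √(quadForm (M a) v) := by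
  let S := Metric.sphere (0 : EuclideanSpace ℝ (Fin d)) 1
  have hcont : ContinuousOn
      (fun p : α × EuclideanSpace ℝ (Fin d) => √(quadForm (M p.1) p.2)) (K ×ˢ S) :=
    ((hM.comp continuousOn_fst fun _ hp => hp.1).quadForm continuousOn_snd).sqrt
  have hpos' : ∀ p ∈ K ×ˢ S, 0 < √(quadForm (M p.1) p.2) := fun p hp =>
    Real.sqrt_pos.2 <| quadForm_pos_of_posDef (hpos _ hp.1) <|
      ne_zero_of_mem_sphere one_ne_zero ⟨_, hp.2⟩
  obtain ⟨c, hc, hcS⟩ := (hK.prod (isCompact_sphere 0 1)).exists_forall_le' hcont hpos'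
  refine ⟨c, hc, fun a ha v => ?_⟩
  rcases eq_or_ne v 0 with rfl | hv
  · simp [quadForm]
  have hnorm : 0 < ‖v‖ := norm_pos_iff.2 hv
  have hunit : ‖v‖⁻¹ • v ∈ S := by simp [S, norm_smul, hnorm.ne']
  calc c * ‖v‖ ≤ √(quadForm (M a) (‖v‖⁻¹ • v)) * ‖v‖ :=
        mul_le_mul_of_nonneg_right (hcS (a, _) ⟨ha, hunit⟩) hnorm.le
    _ = √(quadForm (M a) v) := by
        rw [quadForm_smul, Real.sqrt_mul (by positivity), Real.sqrt_sq (by positivity),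
          mul_comm, ← mul_assoc, mul_inv_cancel₀ hnorm.ne', one_mul]

lemma continuousOn_hess {d : ℕ} {ψ : EuclideanSpace ℝ (Fin d) → ℝ}
    {V : Set (EuclideanSpace ℝ (Fin d))} (hV : IsOpen V) (hψ : ContDiffOn ℝ 2 ψ V) :
    ContinuousOn (hess ψ) V := by
  have h : ContinuousOn (iteratedFDeriv ℝ 2 ψ) V :=
    (hψ.continuousOn_iteratedFDerivWithin le_rfl hV.uniqueDiffOn).congr
      (iteratedFDerivWithin_of_isOpen 2 hV).symm
  exact continuousOn_pi.2 fun i => continuousOn_pi.2 fun j =>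
    (continuous_eval_const _).comp_continuousOn h

section Bregman

variable {d : ℕ} {ψ : EuclideanSpace ℝ (Fin d) → ℝ} {X : Set (EuclideanSpace ℝ (Fin d))}

lemma breg_le_mul_norm_sub (hX : Convex ℝ X) {G : ℝ}
    (hdiff : ∀ z ∈ X, DifferentiableAt ℝ ψ z) (hG : ∀ z ∈ X, ‖fderiv ℝ ψ z‖ ≤ G)
    {x y : EuclideanSpace ℝ (Fin d)} (hx : x ∈ X) (hy : y ∈ X) :
    breg ψ x y ≤ 2 * G * ‖x - y‖ := by
  have hψ : ψ x - ψ y ≤ G * ‖x - y‖ :=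
    (le_abs_self _).trans (hX.norm_image_sub_le_of_norm_fderiv_le hdiff hG hy hx)
  have hgrad : -inner ℝ (gradient ψ y) (x - y) ≤ G * ‖x - y‖ :=
    calc -inner ℝ (gradient ψ y) (x - y) ≤ ‖gradient ψ y‖ * ‖x - y‖ :=
          (neg_le_abs _).trans (abs_real_inner_le_norm _ _)
      _ ≤ G * ‖x - y‖ := by
          gcongr
          rw [gradient, LinearIsometryEquiv.norm_map]
          exact hG y hy
  rw [breg]
  linarith

lemma exists_breg_le_mul_norm_sub (hXc : IsCompact X) (hX : Convex ℝ X)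
    {V : Set (EuclideanSpace ℝ (Fin d))} (hV : IsOpen V) (hXV : X ⊆ V)
    (hψ : ContDiffOn ℝ 1 ψ V) :
    ∃ G > 0, ∀ x ∈ X, ∀ y ∈ X, breg ψ x y ≤ G * ‖x - y‖ := by
  obtain ⟨C, hC⟩ :=
    hXc.exists_bound_of_continuousOn ((hψ.continuousOn_fderiv_of_isOpen hV le_rfl).mono hXV)
  have hdiff : ∀ z ∈ X, DifferentiableAt ℝ ψ z := fun z hz =>
    (hψ.differentiableOn one_ne_zero).differentiableAt (hV.mem_nhds (hXV hz))
  refine ⟨2 * max C 1, by positivity, fun x hx y hy => ?_⟩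
  exact breg_le_mul_norm_sub hX hdiff (fun z hz => (hC z hz).trans (le_max_left _ _)) hx hy

end Bregman

section RiemDist

variable {d : ℕ} {X : Set (EuclideanSpace ℝ (Fin d))} {c : ℝ}

lemma mul_norm_sub_le_integral_sqrt_quadForm
    {M : EuclideanSpace ℝ (Fin d) → Matrix (Fin d) (Fin d) ℝ} (hM : ContinuousOn M X)
    (hc0 : 0 ≤ c) (hc : ∀ z ∈ X, ∀ v, c * ‖v‖ ≤ √(quadForm (M z) v))
    {u : ℝ → EuclideanSpace ℝ (Fin d)} (hu : ContDiff ℝ 1 u)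
    (huX : ∀ t ∈ Icc (0 : ℝ) 1, u t ∈ X) :
    c * ‖u 1 - u 0‖ ≤ ∫ t in (0 : ℝ)..1, √(quadForm (M (u t)) (deriv u t)) := by
  have hu' : Continuous (deriv u) := hu.continuous_deriv le_rfl
  have hlen : IntervalIntegrable (fun t => √(quadForm (M (u t)) (deriv u t)))
      MeasureTheory.volume 0 1 := by
    refine ContinuousOn.intervalIntegrable ?_
    rw [uIcc_of_le zero_le_one]
    exact ((hM.comp hu.continuous.continuousOn huX).quadForm hu'.continuousOn).sqrt
  have hdisp : ‖u 1 - u 0‖ ≤ ∫ t in (0 : ℝ)..1, ‖deriv u t‖ :=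
    norm_sub_le_integral_of_norm_deriv_le_of_le zero_le_one hu.continuous.continuousOn
      (hu.differentiable one_ne_zero).differentiableOn
      (Filter.Eventually.of_forall fun _ _ => le_rfl) (hu'.norm.intervalIntegrable _ _)
  calc c * ‖u 1 - u 0‖ ≤ c * ∫ t in (0 : ℝ)..1, ‖deriv u t‖ := by gcongr
    _ = ∫ t in (0 : ℝ)..1, c * ‖deriv u t‖ := (intervalIntegral.integral_const_mul _ _).symm
    _ ≤ ∫ t in (0 : ℝ)..1, √(quadForm (M (u t)) (deriv u t)) :=
        intervalIntegral.integral_mono_on zero_le_one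
          ((continuous_const.mul hu'.norm).intervalIntegrable _ _) hlen
          fun t ht => hc _ (huX t ht) _

lemma mul_norm_sub_le_riemDist (hX : Convex ℝ X) {ψ : EuclideanSpace ℝ (Fin d) → ℝ}
    (hcont : ContinuousOn (hess ψ) X) (hc0 : 0 ≤ c)
    (hc : ∀ z ∈ X, ∀ v, c * ‖v‖ ≤ √(quadForm (hess ψ z) v))
    {x y : EuclideanSpace ℝ (Fin d)} (hx : x ∈ X) (hy : y ∈ X) :
    c * ‖x - y‖ ≤ riemDist X ψ x y := by
  refine le_csInf ⟨_, AffineMap.lineMap x y, AffineMap.contDiff_lineMap x y,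
    fun t ht => hX.lineMap_mem hx hy ht, AffineMap.lineMap_apply_zero x y,
    AffineMap.lineMap_apply_one x y, rfl⟩ ?_
  rintro L ⟨u, hu, huX, rfl, rfl, rfl⟩
  rw [norm_sub_rev]
  exact mul_norm_sub_le_integral_sqrt_quadForm hcont hc0 hc hu huX

end RiemDist

theorem stmt7_general {d : ℕ} (X : Set (EuclideanSpace ℝ (Fin d)))
    (hXcomp : IsCompact X) (hXconv : Convex ℝ X)
    (ψ : EuclideanSpace ℝ (Fin d) → ℝ)
    (hC2 : ∃ V : Set (EuclideanSpace ℝ (Fin d)), IsOpen V ∧ X ⊆ V ∧ ContDiffOn ℝ 2 ψ V)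
    (hpos : ∀ x ∈ X, (hess ψ x).PosDef) :
    ∃ M : ℝ, 0 < M ∧ ∀ x ∈ X, ∀ y ∈ X, breg ψ x y ≤ M * riemDist X ψ x y := by
  obtain ⟨V, hV, hXV, hψ⟩ := hC2
  have hcont : ContinuousOn (hess ψ) X := (continuousOn_hess hV hψ).mono hXV
  obtain ⟨c, hc, hlow⟩ := exists_pos_mul_norm_le_sqrt_quadForm hXcomp hcont hpos
  obtain ⟨G, hG, hbreg⟩ :=
    exists_breg_le_mul_norm_sub hXcomp hXconv hV hXV (hψ.of_le one_le_two)
  refine ⟨G / c, by positivity, fun x hx y hy => ?_⟩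
  calc breg ψ x y ≤ G * ‖x - y‖ := hbreg x hx y hy
    _ = G / c * (c * ‖x - y‖) := by field_simp
    _ ≤ G / c * riemDist X ψ x y := by
        gcongr
        exact mul_norm_sub_le_riemDist hXconv hcont hc.le hlow hx hy

/-- On a compact convex set, the Bregman distance is bounded by a constant multiple
of the Riemannian distance. -/
theorem stmt7 {d : ℕ} (X : Set (EuclideanSpace ℝ (Fin d)))
    (hXcomp : IsCompact X) (hXconv : Convex ℝ X) (hXint : (interior X).Nonempty)
    (ψ : EuclideanSpace ℝ (Fin d) → ℝ)
    (hC2 : ∃ V : Set (EuclideanSpace ℝ (Fin d)), IsOpen V ∧ X ⊆ V ∧ ContDiffOn ℝ 2 ψ V)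
    (hpos : ∀ x ∈ X, (hess ψ x).PosDef) :
    ∃ M : ℝ, 0 < M ∧ ∀ x ∈ X, ∀ y ∈ X, breg ψ x y ≤ M * riemDist X ψ x y :=
  stmt7_general X hXcomp hXconv ψ hC2 hpos
end
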